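/- Let n ≥ 3 be an integer and let z ∈ C²(ℝ) solve the Emden-type ODE z̈(t) + (n−4+2z(t))·ż(t) − 2(n−2)·(z(t)−z(t)²) = 0 for all t ∈ ℝ, and suppose there exists C < ∞ with 0 < z(t) < C and |ż(t)| < C for all t ∈ ℝ. If lim_{t→∞} ż(t) = 0, then z(t) converges as t → ∞ and lim_{t→∞} z(t) ∈ {0, 1}. -/

import Mathlib

open Set Filter

noncomputable section

/-- The Emden-type ODE `z̈ + (n−4+2z)·ż − 2(n−2)·(z−z²) = 0` on all of `ℝ`. -/
def EmdenODE (n : ℕ) (z : ℝ → ℝ) : Prop :=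
  ∀ t : ℝ, deriv (deriv z) t + ((n : ℝ) - 4 + 2 * z t) * deriv z t
    - 2 * ((n : ℝ) - 2) * (z t - (z t) ^ 2) = 0

/-- Crossing lemma: if `w` is C², its second derivative is at least `δ > 0` whenever
`w` is in the band `[p,q]` (for times `≥ T`), its first derivative is small (`≤ η`) for
times `≥ T`, and `2η² < δ(q-p)`, then `w` cannot oscillate across the band. -/
lemma osc_aux (w : ℝ → ℝ) (hw : ContDiff ℝ 2 w) (p q δ η T : ℝ) (hpq : p < q) (hδ : 0 < δ)
    (hdd : ∀ t : ℝ, T ≤ t → w t ∈ Icc p q → δ ≤ deriv (deriv w) t)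
    (hd : ∀ t : ℝ, T ≤ t → |deriv w t| ≤ η)
    (hsmall : 2 * η ^ 2 < δ * (q - p))
    (hhi : ∃ᶠ t in atTop, q < w t) (hlo : ∃ᶠ t in atTop, w t < p) : False := by
  have hw1 : Differentiable ℝ w := hw.differentiable (by norm_num)
  have hwd : ContDiff ℝ 1 (deriv w) := by
    have h2 : ContDiff ℝ (1+1) w := by norm_num; exact hw
    exact (contDiff_succ_iff_deriv.mp h2).2.2
  have hwd1 : Differentiable ℝ (deriv w) := hwd.differentiable one_ne_zero
  have hη0 : 0 ≤ η := le_trans (abs_nonneg _) (hd T le_rfl)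
  have hcw : Continuous w := hw.continuous
  obtain ⟨t₁, ht₁q, ht₁T⟩ : ∃ t, q < w t ∧ T ≤ t :=
    (hhi.and_eventually (eventually_ge_atTop T)).exists
  obtain ⟨t₂, ht₂p, ht₂t₁⟩ : ∃ t, w t < p ∧ t₁ ≤ t :=
    (hlo.and_eventually (eventually_ge_atTop t₁)).exists
  have h12 : t₁ < t₂ := lt_of_le_of_ne ht₂t₁ (by rintro rfl; linarith)
  -- last time `w = q` before `t₂`
  have hSc : IsClosed (Icc t₁ t₂ ∩ w ⁻¹' {q}) :=
    isClosed_Icc.inter (isClosed_singleton.preimage hcw)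
  have hSne : (Icc t₁ t₂ ∩ w ⁻¹' {q}).Nonempty := by
    have hq : q ∈ Icc (w t₂) (w t₁) := ⟨by linarith, ht₁q.le⟩
    obtain ⟨x, hx, hxq⟩ := intermediate_value_Icc' h12.le hcw.continuousOn hq
    exact ⟨x, hx, hxq⟩
  have hSbdd : BddAbove (Icc t₁ t₂ ∩ w ⁻¹' {q}) := bddAbove_Icc.mono inter_subset_left
  obtain ⟨a, ⟨haI, haq'⟩, haub⟩ :
      ∃ a, a ∈ Icc t₁ t₂ ∩ w ⁻¹' {q} ∧ ∀ x ∈ Icc t₁ t₂ ∩ w ⁻¹' {q}, x ≤ a :=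
    ⟨sSup _, hSc.csSup_mem hSne hSbdd, fun x hx => le_csSup hSbdd hx⟩
  have haq : w a = q := haq'
  have hup : ∀ t, a < t → t ≤ t₂ → w t < q := by
    intro t hat ht2
    by_contra hcon
    push_neg at hcon
    have hq : q ∈ Icc (w t₂) (w t) := ⟨by linarith, hcon⟩
    obtain ⟨x, hx, hxq⟩ := intermediate_value_Icc' ht2 hcw.continuousOn hq
    have : x ≤ a := haub x ⟨⟨le_trans haI.1 (le_trans hat.le hx.1), hx.2⟩, hxq⟩
    have : t ≤ x := hx.1
    linarith
  have hat₂ : a < t₂ := lt_of_le_of_ne haI.2 (fun h => by rw [h] at haq; linarith)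
  -- first time `w = p` after `a`
  have hS2c : IsClosed (Icc a t₂ ∩ w ⁻¹' {p}) :=
    isClosed_Icc.inter (isClosed_singleton.preimage hcw)
  have hS2ne : (Icc a t₂ ∩ w ⁻¹' {p}).Nonempty := by
    have hp : p ∈ Icc (w t₂) (w a) := ⟨ht₂p.le, by rw [haq]; linarith⟩
    obtain ⟨x, hx, hxp⟩ := intermediate_value_Icc' hat₂.le hcw.continuousOn hp
    exact ⟨x, hx, hxp⟩
  have hS2bdd : BddBelow (Icc a t₂ ∩ w ⁻¹' {p}) := bddBelow_Icc.mono inter_subset_left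
  obtain ⟨b, ⟨hbI, hbp'⟩, hblb⟩ :
      ∃ b, b ∈ Icc a t₂ ∩ w ⁻¹' {p} ∧ ∀ x ∈ Icc a t₂ ∩ w ⁻¹' {p}, b ≤ x :=
    ⟨sInf _, hS2c.csInf_mem hS2ne hS2bdd, fun x hx => csInf_le hS2bdd hx⟩
  have hbp : w b = p := hbp'
  have hab : a < b := lt_of_le_of_ne hbI.1 (fun h => by rw [h] at haq; rw [haq] at hbp; linarith)
  have hlow : ∀ t, a ≤ t → t < b → p < w t := by
    intro t hat htb
    by_contra hcon
    push_neg at hcon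
    have hp : p ∈ Icc (w t) (w a) := ⟨hcon, by rw [haq]; linarith⟩
    obtain ⟨x, hx, hxp⟩ := intermediate_value_Icc' hat hcw.continuousOn hp
    have : b ≤ x := hblb x ⟨⟨hx.1, le_trans hx.2 (le_trans htb.le hbI.2)⟩, hxp⟩
    have : x ≤ t := hx.2
    linarith
  have band : ∀ t ∈ Icc a b, w t ∈ Icc p q := by
    intro t ht
    constructor
    · rcases eq_or_lt_of_le ht.2 with h | h
      · rw [h, hbp]
      · exact (hlow t ht.1 h).le
    · rcases eq_or_lt_of_le ht.1 with h | h
      · rw [← h, haq]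
      · exact (hup t h (ht.2.trans hbI.2)).le
  have hTa : T ≤ a := ht₁T.trans haI.1
  have hba : (0:ℝ) < b - a := by linarith
  -- MVT for the derivative: δ (b - a) ≤ 2 η
  obtain ⟨ξ, hξ, hξeq⟩ := exists_deriv_eq_slope (deriv w) hab
    hwd1.continuous.continuousOn hwd1.differentiableOn
  have hξδ : δ ≤ deriv (deriv w) ξ :=
    hdd ξ (hTa.trans hξ.1.le) (band ξ ⟨hξ.1.le, hξ.2.le⟩)
  have hlen : δ * (b - a) ≤ 2 * η := by
    rw [hξeq] at hξδ
    have h1 : δ * (b - a) ≤ deriv w b - deriv w a := by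
      rw [le_div_iff₀ hba] at hξδ; linarith
    have h2 := abs_le.mp (hd b (hTa.trans hbI.1))
    have h3 := abs_le.mp (hd a hTa)
    linarith
  -- MVT for w: q - p ≤ η (b - a)
  obtain ⟨ζ, hζ, hζeq⟩ := exists_deriv_eq_slope w hab hcw.continuousOn hw1.differentiableOn
  have hζη : |deriv w ζ| ≤ η := hd ζ (hTa.trans hζ.1.le)
  have hqp : q - p ≤ η * (b - a) := by
    rw [hζeq, hbp, haq, abs_div, abs_of_pos hba, abs_of_neg (by linarith : p - q < 0),
      div_le_iff₀ hba] at hζη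
    linarith
  nlinarith [mul_le_mul_of_nonneg_left hlen hη0, mul_le_mul_of_nonneg_left hqp hδ.le]

set_option maxHeartbeats 2000000 in
theorem stmt14 (n : ℕ) (hn : 3 ≤ n) (z : ℝ → ℝ) (hz : ContDiff ℝ 2 z)
    (hode : EmdenODE n z)
    (C : ℝ) (hbd : ∀ t : ℝ, 0 < z t ∧ z t < C ∧ |deriv z t| < C)
    (hlim : Tendsto (deriv z) atTop (nhds 0)) :
    ∃ L : ℝ, (L = 0 ∨ L = 1) ∧ Tendsto z atTop (nhds L) := by
  have hC0 : (0:ℝ) < C := lt_trans (hbd 0).1 (hbd 0).2.1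
  have hn3 : (3:ℝ) ≤ (n:ℝ) := by exact_mod_cast hn
  have hodef : ∀ t, deriv (deriv z) t
      = -(((n : ℝ) - 4 + 2 * z t) * deriv z t) + 2 * ((n : ℝ) - 2) * (z t - (z t) ^ 2) := by
    intro t; have := hode t; linarith
  have hble : IsBoundedUnder (· ≤ ·) atTop z := isBoundedUnder_of ⟨C, fun t => (hbd t).2.1.le⟩
  have hbge : IsBoundedUnder (· ≥ ·) atTop z := isBoundedUnder_of ⟨0, fun t => (hbd t).1.le⟩
  have hm0 : 0 ≤ liminf z atTop :=
    le_liminf_of_le hble.isCoboundedUnder_ge (Eventually.of_forall fun t => (hbd t).1.le)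
  -- bound `|n - 4 + 2 z t| ≤ K`
  obtain ⟨K, hK0, hKb⟩ : ∃ K : ℝ, 0 < K ∧ ∀ t, |(n:ℝ) - 4 + 2 * z t| ≤ K := by
    refine ⟨|(n:ℝ) - 4| + 2 * C, by positivity, fun t => (abs_add_le _ _).trans ?_⟩
    have h1 : |2 * z t| ≤ 2 * C := by
      rw [abs_of_pos (by linarith [(hbd t).1])]
      linarith [(hbd t).2.1]
    linarith
  -- Main claim: liminf = limsup
  have hmM : liminf z atTop = limsup z atTop := by
    by_contra hne
    have hmM : liminf z atTop < limsup z atTop :=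
      lt_of_le_of_ne (liminf_le_limsup hble hbge) hne
    set M := limsup z atTop with hM_def
    set m := liminf z atTop with hm_def
    -- choose μ in (m, M) with μ ≠ 1
    obtain ⟨μ, hμ1, hμ2, hμ3⟩ : ∃ μ, m < μ ∧ μ < M ∧ μ ≠ 1 := by
      rcases eq_or_ne ((m + M) / 2) 1 with h | h
      · exact ⟨(3 * m + M) / 4, by linarith, by linarith, by intro hc; nlinarith⟩
      · exact ⟨(m + M) / 2, by linarith, by linarith, h⟩
    have hμ0 : 0 < μ := lt_of_le_of_lt hm0 hμ1
    have hfr_hi : ∀ r, r < M → ∃ᶠ t in atTop, r < z t := fun r hr =>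
      frequently_lt_of_lt_limsup hbge.isCoboundedUnder_le hr
    have hfr_lo : ∀ r, m < r → ∃ᶠ t in atTop, z t < r := fun r hr =>
      frequently_lt_of_liminf_lt hble.isCoboundedUnder_ge hr
    -- case split on μ vs 1
    rcases lt_or_gt_of_ne hμ3 with hμlt | hμgt
    · -- case μ < 1 : band in (0,1), z̈ ≥ δ on band
      obtain ⟨ε, hε0, hεm, hεM, hεμ, hε1⟩ :
          ∃ ε : ℝ, 0 < ε ∧ m < μ - ε ∧ μ + ε < M ∧ 0 < μ - ε ∧ μ + ε < 1 := by
        refine ⟨min ((μ - m) / 2) (min ((M - μ) / 2) (min (μ / 2) ((1 - μ) / 2))),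
          lt_min (by linarith) (lt_min (by linarith) (lt_min (by linarith) (by linarith))),
          ?_, ?_, ?_, ?_⟩
        · have := min_le_left ((μ - m) / 2) (min ((M - μ) / 2) (min (μ / 2) ((1 - μ) / 2)))
          linarith
        · have h1 := min_le_right ((μ - m) / 2) (min ((M - μ) / 2) (min (μ / 2) ((1 - μ) / 2)))
          have h2 := min_le_left ((M - μ) / 2) (min (μ / 2) ((1 - μ) / 2))
          linarith
        · have h1 := min_le_right ((μ - m) / 2) (min ((M - μ) / 2) (min (μ / 2) ((1 - μ) / 2)))
          have h2 := min_le_right ((M - μ) / 2) (min (μ / 2) ((1 - μ) / 2))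
          have h3 := min_le_left (μ / 2) ((1 - μ) / 2)
          linarith
        · have h1 := min_le_right ((μ - m) / 2) (min ((M - μ) / 2) (min (μ / 2) ((1 - μ) / 2)))
          have h2 := min_le_right ((M - μ) / 2) (min (μ / 2) ((1 - μ) / 2))
          have h3 := min_le_right (μ / 2) ((1 - μ) / 2)
          linarith
      obtain ⟨δ, hδpos, hbandδ⟩ :
          ∃ δ : ℝ, 0 < δ ∧ ∀ x : ℝ, μ - ε ≤ x → x ≤ μ + ε →
            2 * δ ≤ 2 * ((n:ℝ) - 2) * (x - x ^ 2) := by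
        refine ⟨((n:ℝ) - 2) * ((μ - ε) * (1 - (μ + ε))),
          mul_pos (by linarith) (mul_pos (by linarith) (by linarith)), fun x h1 h2 => ?_⟩
        have h3 : (μ - ε) * (1 - (μ + ε)) ≤ x * (1 - x) :=
          mul_le_mul h1 (by linarith) (by linarith) (by linarith)
        nlinarith [mul_le_mul_of_nonneg_left h3 (show (0:ℝ) ≤ 2 * ((n:ℝ) - 2) by linarith)]
      obtain ⟨η, hηpos, hηK, hηsq⟩ :
          ∃ η : ℝ, 0 < η ∧ K * η ≤ δ ∧ 2 * η ^ 2 < δ * ((μ + ε) - (μ - ε)) := by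
        have hsd : 0 < Real.sqrt (ε * δ / 2) := Real.sqrt_pos.mpr (by positivity)
        refine ⟨min (δ / K) (Real.sqrt (ε * δ / 2)),
          lt_min (by positivity) hsd, ?_, ?_⟩
        · have h := min_le_left (δ / K) (Real.sqrt (ε * δ / 2))
          rw [mul_comm]
          exact (le_div_iff₀ hK0).mp h
        · have h2 := Real.sq_sqrt (show (0:ℝ) ≤ ε * δ / 2 by positivity)
          have h3 := min_le_right (δ / K) (Real.sqrt (ε * δ / 2))
          have hmin0 : 0 < min (δ / K) (Real.sqrt (ε * δ / 2)) :=
            lt_min (by positivity) hsd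
          have h5 : (min (δ / K) (Real.sqrt (ε * δ / 2))) ^ 2 ≤ ε * δ / 2 := by
            nlinarith
          nlinarith [mul_pos hε0 hδpos]
      obtain ⟨T, hT⟩ : ∃ T, ∀ t, T ≤ t → |deriv z t| ≤ η := by
        rw [Metric.tendsto_atTop] at hlim
        obtain ⟨T, hT⟩ := hlim η hηpos
        exact ⟨T, fun t ht => by
          have := hT t ht; rw [Real.dist_eq, sub_zero] at this; exact this.le⟩
      refine osc_aux z hz (μ - ε) (μ + ε) δ η T (by linarith) hδpos ?_ hT hηsq
        (hfr_hi (μ + ε) hεM) (hfr_lo (μ - ε) hεm)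
      intro t hTt hband'
      rw [hodef t]
      have h1 : |((n:ℝ) - 4 + 2 * z t) * deriv z t| ≤ K * η :=
        (abs_mul _ _).le.trans (mul_le_mul (hKb t) (hT t hTt) (abs_nonneg _) hK0.le)
      have h2 := abs_le.mp h1
      have h3 := hbandδ (z t) hband'.1 hband'.2
      linarith
    · -- case μ > 1 : band in (1,∞), z̈ ≤ -δ; apply osc_aux to -z
      obtain ⟨ε, hε0, hεm, hεM, hε1⟩ :
          ∃ ε : ℝ, 0 < ε ∧ m < μ - ε ∧ μ + ε < M ∧ 1 < μ - ε := by
        refine ⟨min ((μ - m) / 2) (min ((M - μ) / 2) ((μ - 1) / 2)),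
          lt_min (by linarith) (lt_min (by linarith) (by linarith)), ?_, ?_, ?_⟩
        · have := min_le_left ((μ - m) / 2) (min ((M - μ) / 2) ((μ - 1) / 2))
          linarith
        · have h1 := min_le_right ((μ - m) / 2) (min ((M - μ) / 2) ((μ - 1) / 2))
          have h2 := min_le_left ((M - μ) / 2) ((μ - 1) / 2)
          linarith
        · have h1 := min_le_right ((μ - m) / 2) (min ((M - μ) / 2) ((μ - 1) / 2))
          have h2 := min_le_right ((M - μ) / 2) ((μ - 1) / 2)
          linarith
      obtain ⟨δ, hδpos, hbandδ⟩ :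
          ∃ δ : ℝ, 0 < δ ∧ ∀ x : ℝ, μ - ε ≤ x → x ≤ μ + ε →
            2 * ((n:ℝ) - 2) * (x - x ^ 2) ≤ -(2 * δ) := by
        refine ⟨((n:ℝ) - 2) * ((μ - ε) * ((μ - ε) - 1)),
          mul_pos (by linarith) (mul_pos (by linarith) (by linarith)), fun x h1 h2 => ?_⟩
        have h3 : (μ - ε) * ((μ - ε) - 1) ≤ x * (x - 1) :=
          mul_le_mul h1 (by linarith) (by linarith) (by linarith)
        nlinarith [mul_le_mul_of_nonneg_left h3 (show (0:ℝ) ≤ 2 * ((n:ℝ) - 2) by linarith)]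
      obtain ⟨η, hηpos, hηK, hηsq⟩ :
          ∃ η : ℝ, 0 < η ∧ K * η ≤ δ ∧ 2 * η ^ 2 < δ * (2 * ε) := by
        have hsd : 0 < Real.sqrt (ε * δ / 2) := Real.sqrt_pos.mpr (by positivity)
        refine ⟨min (δ / K) (Real.sqrt (ε * δ / 2)),
          lt_min (by positivity) hsd, ?_, ?_⟩
        · have h := min_le_left (δ / K) (Real.sqrt (ε * δ / 2))
          rw [mul_comm]
          exact (le_div_iff₀ hK0).mp h
        · have h2 := Real.sq_sqrt (show (0:ℝ) ≤ ε * δ / 2 by positivity)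
          have h3 := min_le_right (δ / K) (Real.sqrt (ε * δ / 2))
          have hmin0 : 0 < min (δ / K) (Real.sqrt (ε * δ / 2)) :=
            lt_min (by positivity) hsd
          have h5 : (min (δ / K) (Real.sqrt (ε * δ / 2))) ^ 2 ≤ ε * δ / 2 := by
            nlinarith
          nlinarith [mul_pos hε0 hδpos]
      obtain ⟨T, hT⟩ : ∃ T, ∀ t, T ≤ t → |deriv z t| ≤ η := by
        rw [Metric.tendsto_atTop] at hlim
        obtain ⟨T, hT⟩ := hlim η hηpos
        exact ⟨T, fun t ht => by
          have := hT t ht; rw [Real.dist_eq, sub_zero] at this; exact this.le⟩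
      have hdw : deriv (fun t => -z t) = fun t => -deriv z t := deriv.neg'
      have hddw : deriv (deriv (fun t => -z t)) = fun t => -deriv (deriv z) t := by
        rw [hdw]; exact deriv.neg'
      refine osc_aux (fun t => -z t) hz.neg (-(μ + ε)) (-(μ - ε)) δ η T (by linarith) hδpos
        ?_ ?_ (by rw [show (-(μ - ε)) - (-(μ + ε)) = 2 * ε from by ring]; exact hηsq) ?_ ?_
      · intro t hTt hband'
        rw [hddw]
        have hb1 : -(μ + ε) ≤ -z t := hband'.1
        have hb2 : -z t ≤ -(μ - ε) := hband'.2
        have hband2 : μ - ε ≤ z t ∧ z t ≤ μ + ε := ⟨by linarith, by linarith⟩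
        show δ ≤ -deriv (deriv z) t
        rw [hodef t]
        have h1 : |((n:ℝ) - 4 + 2 * z t) * deriv z t| ≤ K * η :=
          (abs_mul _ _).le.trans (mul_le_mul (hKb t) (hT t hTt) (abs_nonneg _) hK0.le)
        have h2 := abs_le.mp h1
        have h3 := hbandδ (z t) hband2.1 hband2.2
        linarith
      · intro t hTt
        rw [hdw]
        show |(-deriv z t)| ≤ η
        rw [abs_neg]
        exact hT t hTt
      · exact (hfr_lo (μ - ε) hεm).mono fun t ht => by
          show -(μ - ε) < -z t; linarith
      · exact (hfr_hi (μ + ε) hεM).mono fun t ht => by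
          show (fun t => -z t) t < -(μ + ε); show -z t < -(μ + ε); linarith
  -- So z converges to L := limsup z atTop
  have ht : Tendsto z atTop (nhds (limsup z atTop)) :=
    tendsto_of_liminf_eq_limsup hmM rfl hble hbge
  obtain ⟨L, htL⟩ : ∃ L : ℝ, Tendsto z atTop (nhds L) := ⟨_, ht⟩
  refine ⟨L, ?_, htL⟩
  -- second derivative converges to c := 2(n-2)(L - L²)
  have hL2 : Tendsto (fun t => deriv (deriv z) t) atTop
      (nhds (2 * ((n:ℝ) - 2) * (L - L ^ 2))) := by
    have h1 : Tendsto (fun t => -(((n : ℝ) - 4 + 2 * z t) * deriv z t)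
        + 2 * ((n : ℝ) - 2) * (z t - (z t) ^ 2)) atTop
        (nhds (-(((n : ℝ) - 4 + 2 * L) * 0) + 2 * ((n : ℝ) - 2) * (L - L ^ 2))) := by
      apply Tendsto.add
      · exact ((tendsto_const_nhds.add (htL.const_mul 2)).mul hlim).neg
      · exact ((htL.sub (htL.pow 2)).const_mul _)
    have h2 : -(((n : ℝ) - 4 + 2 * L) * 0) + 2 * ((n : ℝ) - 2) * (L - L ^ 2)
        = 2 * ((n:ℝ) - 2) * (L - L ^ 2) := by ring
    rw [h2] at h1
    exact h1.congr fun t => (hodef t).symm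
  -- show c = 0 via MVT
  have hc0 : 2 * ((n:ℝ) - 2) * (L - L ^ 2) = 0 := by
    by_contra hc
    set c : ℝ := 2 * ((n:ℝ) - 2) * (L - L ^ 2) with hc_def
    have hcabs : 0 < |c| := abs_pos.mpr hc
    obtain ⟨T₁, hT₁⟩ : ∃ T, ∀ t, T ≤ t → |deriv (deriv z) t - c| < |c| / 2 := by
      rw [Metric.tendsto_atTop] at hL2
      obtain ⟨T, hT⟩ := hL2 (|c| / 2) (by positivity)
      exact ⟨T, fun t htT => by have := hT t htT; rwa [Real.dist_eq] at this⟩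
    obtain ⟨T₂, hT₂⟩ : ∃ T, ∀ t, T ≤ t → |deriv z t| < |c| / 8 := by
      rw [Metric.tendsto_atTop] at hlim
      obtain ⟨T, hT⟩ := hlim (|c| / 8) (by positivity)
      exact ⟨T, fun t htT => by have := hT t htT; rwa [Real.dist_eq, sub_zero] at this⟩
    have hzd1 : Differentiable ℝ (deriv z) := by
      have h2 : ContDiff ℝ (1+1) z := by norm_num; exact hz
      exact ((contDiff_succ_iff_deriv.mp h2).2.2).differentiable one_ne_zero
    obtain ⟨ξ, hξ, hξeq⟩ := exists_deriv_eq_slope (deriv z)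
      (show max T₁ T₂ < max T₁ T₂ + 1 by linarith)
      hzd1.continuous.continuousOn hzd1.differentiableOn
    have h1 : deriv (deriv z) ξ = deriv z (max T₁ T₂ + 1) - deriv z (max T₁ T₂) := by
      rw [hξeq]; simp
    have h2 : |deriv (deriv z) ξ - c| < |c| / 2 :=
      hT₁ ξ (le_trans (le_max_left T₁ T₂) hξ.1.le)
    have h3 : |deriv z (max T₁ T₂ + 1)| < |c| / 8 :=
      hT₂ (max T₁ T₂ + 1) (by linarith [le_max_right T₁ T₂])
    have h4 : |deriv z (max T₁ T₂)| < |c| / 8 := hT₂ (max T₁ T₂) (le_max_right T₁ T₂)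
    have h5 := abs_le.mp h2.le
    have h6 := abs_le.mp h3.le
    have h7 := abs_le.mp h4.le
    rw [h1] at h5
    rcases abs_cases c with ⟨hc1, _⟩ | ⟨hc1, _⟩ <;> linarith
  -- conclude L = 0 ∨ L = 1
  have hne2 : 2 * ((n:ℝ) - 2) ≠ 0 := by
    have : (0:ℝ) < 2 * ((n:ℝ) - 2) := by linarith
    exact this.ne'
  have h1 : L - L ^ 2 = 0 := by
    rcases mul_eq_zero.mp hc0 with h | h
    · exact absurd h hne2
    · exact h
  have hLL : L * (1 - L) = 0 := by nlinarith [h1]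
  rcases mul_eq_zero.mp hLL with h | h
  · exact Or.inl h
  · exact Or.inr (by linarith)

end
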